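/- Let Φ ∈ ℝ^{n×d}, γ ∈ [0,1), and suppose for every policy π ∈ Π_Φ^D and every action a ∈ A there exist matrices/vectors P̂_π, R̂_π, P̂_a, R̂_a with Φ P̂_π = P_π Φ, Φ R̂_π = R_π, Φ P̂_a = P_a Φ, Φ R̂_a = R_a, and each I − γ P̂_π is invertible. Then for every π ∈ Π_Φ^D and a ∈ A, the action-value vector Q^π(·, a) = R_a + γ P_a V^π lies in the column span of Φ; explicitly Q^π(·, a) = Φ (R̂_a + γ P̂_a (I − γ P̂_π)^{-1} R̂_π). -/
import Mathlib


/-- If `Φ` linearly encodes both the policy-induced dynamics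
(`Φ P̂_π = P_π Φ`, `Φ R̂_π = R_π`) and the per-action dynamics
(`Φ P̂_a = P_a Φ`, `Φ R̂_a = R_a`), with `I − γ P̂_π` and `I − γ P_π` invertible, then the
action-value vector `Q^π(·,a) = R_a + γ P_a V^π` (where `V^π = (I − γ P_π)⁻¹ R_π`)
lies in the column span of `Φ`, explicitly
`Q^π(·,a) = Φ (R̂_a + γ P̂_a (I − γ P̂_π)⁻¹ R̂_π)`. -/
theorem linear_sufficiency_action_values
    {n d : ℕ} (γ : ℝ) (hγ0 : 0 ≤ γ) (hγ1 : γ < 1)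
    (Φ : Matrix (Fin n) (Fin d) ℝ)
    (Ppi : Matrix (Fin n) (Fin n) ℝ) (Rpi : Fin n → ℝ)
    (Phatπ : Matrix (Fin d) (Fin d) ℝ) (Rhatπ : Fin d → ℝ)
    (Pa : Matrix (Fin n) (Fin n) ℝ) (Ra : Fin n → ℝ)
    (Phata : Matrix (Fin d) (Fin d) ℝ) (Rhata : Fin d → ℝ)
    (hPπ : Φ * Phatπ = Ppi * Φ) (hRπ : Φ.mulVec Rhatπ = Rpi)
    (hPa : Φ * Phata = Pa * Φ) (hRa : Φ.mulVec Rhata = Ra)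
    (hinvhat : IsUnit (1 - γ • Phatπ).det)
    (hinvπ : IsUnit (1 - γ • Ppi).det) :
    Ra + γ • Pa.mulVec ((1 - γ • Ppi)⁻¹.mulVec Rpi)
      = Φ.mulVec (Rhata + γ • Phata.mulVec ((1 - γ • Phatπ)⁻¹.mulVec Rhatπ)) := by
  have hcomm : Φ * (1 - γ • Phatπ) = (1 - γ • Ppi) * Φ := by
    rw [Matrix.mul_sub, Matrix.sub_mul, Matrix.mul_one, Matrix.one_mul,
      Matrix.mul_smul, Matrix.smul_mul, hPπ]
  have key : (1 - γ • Ppi)⁻¹ * Φ = Φ * (1 - γ • Phatπ)⁻¹ := by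
    have h1 : (1 - γ • Ppi)⁻¹ * (Φ * (1 - γ • Phatπ)) * (1 - γ • Phatπ)⁻¹
        = (1 - γ • Ppi)⁻¹ * ((1 - γ • Ppi) * Φ) * (1 - γ • Phatπ)⁻¹ := by rw [hcomm]
    rwa [Matrix.mul_assoc _ (Φ * _), Matrix.mul_assoc Φ,
      Matrix.mul_nonsing_inv _ hinvhat, Matrix.mul_one,
      ← Matrix.mul_assoc _ (1 - γ • Ppi), Matrix.nonsing_inv_mul _ hinvπ,
      Matrix.one_mul] at h1
  rw [Matrix.mulVec_add, hRa]
  congr 1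
  rw [← hRπ]
  simp only [Matrix.mulVec_smul, Matrix.mulVec_mulVec]
  rw [← Matrix.mul_assoc, Matrix.mul_assoc Pa, key, ← Matrix.mul_assoc, ← hPa, Matrix.mul_assoc]
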